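/- Let H be a Hopf algebra over ℂ with comultiplication Δ, counit ε and antipode S, and let u ∈ H satisfy u·u = 1, Δ(u) = u ⊗ u and ε(u) = 1. Define P : H ⊗ H → H ⊗ H by P(y) := (1/2)(y + (1⊗u)·y·(1⊗u)) + (1/2)(y − (1⊗u)·y·(1⊗u))·(u⊗1) and Δ_u := P ∘ Δ; define p₀, p₁ : H → H by p₀(x) := (1/2)(x + u·x·u), p₁(x) := (1/2)(x − u·x·u), and S_u : H → H by S_u(x) := S(p₀(x)) + u·S(p₁(x)). Then the antipode axioms hold without signs: m ∘ (S_u ⊗ id) ∘ Δ_u = η ∘ ε and m ∘ (id ⊗ S_u) ∘ Δ_u = η ∘ ε, where m : H ⊗ H → H is the multiplication and η : ℂ → H the unit. -/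
import Mathlib


open scoped TensorProduct

noncomputable section

variable (H : Type*) [Ring H] [HopfAlgebra ℂ H]

/-- Conjugation by `1 ⊗ u` on `H ⊗ H`, `y ↦ (1⊗u)·y·(1⊗u)`. -/
def conjT (u : H) : H ⊗[ℂ] H →ₗ[ℂ] H ⊗[ℂ] H :=
  (LinearMap.mulRight ℂ ((1 : H) ⊗ₜ[ℂ] u)).comp (LinearMap.mulLeft ℂ ((1 : H) ⊗ₜ[ℂ] u))

/-- The picture-change operator
`P(y) = ½(y + (1⊗u)y(1⊗u)) + ½(y − (1⊗u)y(1⊗u))·(u⊗1)`. -/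
def Pmap (u : H) : H ⊗[ℂ] H →ₗ[ℂ] H ⊗[ℂ] H :=
  (2 : ℂ)⁻¹ • ((LinearMap.id : H ⊗[ℂ] H →ₗ[ℂ] H ⊗[ℂ] H) + conjT H u) +
    (2 : ℂ)⁻¹ • ((LinearMap.mulRight ℂ (u ⊗ₜ[ℂ] (1 : H))).comp
      ((LinearMap.id : H ⊗[ℂ] H →ₗ[ℂ] H ⊗[ℂ] H) - conjT H u))

/-- The picture-changed comultiplication `Δ_u = P ∘ Δ`. -/
def Deltau (u : H) : H →ₗ[ℂ] H ⊗[ℂ] H :=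
  Pmap H u ∘ₗ (CoalgebraStruct.comul (R := ℂ) (A := H))

/-- Conjugation by `u` on `H`, `x ↦ u·x·u`. -/
def conjH (u : H) : H →ₗ[ℂ] H :=
  (LinearMap.mulRight ℂ u).comp (LinearMap.mulLeft ℂ u)

/-- The even projection `p₀(x) = ½(x + uxu)`. -/
def pEven (u : H) : H →ₗ[ℂ] H := (2 : ℂ)⁻¹ • ((LinearMap.id : H →ₗ[ℂ] H) + conjH H u)

/-- The odd projection `p₁(x) = ½(x − uxu)`. -/
def pOdd (u : H) : H →ₗ[ℂ] H := (2 : ℂ)⁻¹ • ((LinearMap.id : H →ₗ[ℂ] H) - conjH H u)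

/-- The picture-changed antipode `S_u(x) = S(p₀(x)) + u·S(p₁(x))`. -/
def Su (u : H) : H →ₗ[ℂ] H :=
  (HopfAlgebra.antipode (R := ℂ) (A := H)) ∘ₗ pEven H u +
    (LinearMap.mulLeft ℂ u) ∘ₗ (HopfAlgebra.antipode (R := ℂ) (A := H)) ∘ₗ pOdd H u


section AuxConv
variable {H}

noncomputable def convol (f g : H →ₗ[ℂ] H) : H →ₗ[ℂ] H :=
  LinearMap.mul' ℂ H ∘ₗ TensorProduct.map f g ∘ₗ CoalgebraStruct.comul


lemma core (f g h : H →ₗ[ℂ] H) :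
    LinearMap.mul' ℂ H ∘ₗ TensorProduct.map (LinearMap.mul' ℂ H ∘ₗ TensorProduct.map f g) h =
      (LinearMap.mul' ℂ H ∘ₗ TensorProduct.map f (LinearMap.mul' ℂ H ∘ₗ TensorProduct.map g h))
        ∘ₗ (TensorProduct.assoc ℂ H H H).toLinearMap := by
  apply TensorProduct.ext
  apply TensorProduct.ext
  ext a b c
  simp [LinearMap.mul'_apply, mul_assoc]

lemma conv_assoc (f g h : H →ₗ[ℂ] H) : convol (convol f g) h = convol f (convol g h) := by
  unfold convol
  have co : (TensorProduct.assoc ℂ H H H).toLinearMap ∘ₗ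
      TensorProduct.map (CoalgebraStruct.comul (R := ℂ) (A := H)) LinearMap.id ∘ₗ
        CoalgebraStruct.comul =
      TensorProduct.map LinearMap.id (CoalgebraStruct.comul (R := ℂ) (A := H)) ∘ₗ
        CoalgebraStruct.comul := Coalgebra.coassoc
  rw [show TensorProduct.map (LinearMap.mul' ℂ H ∘ₗ TensorProduct.map f g ∘ₗ
        CoalgebraStruct.comul) h =
      TensorProduct.map (LinearMap.mul' ℂ H ∘ₗ TensorProduct.map f g) h ∘ₗ
        TensorProduct.map CoalgebraStruct.comul LinearMap.id by
    rw [← TensorProduct.map_comp, LinearMap.comp_id, LinearMap.comp_assoc]]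
  rw [show TensorProduct.map f (LinearMap.mul' ℂ H ∘ₗ TensorProduct.map g h ∘ₗ
        CoalgebraStruct.comul) =
      TensorProduct.map f (LinearMap.mul' ℂ H ∘ₗ TensorProduct.map g h) ∘ₗ
        TensorProduct.map LinearMap.id CoalgebraStruct.comul by
    rw [← TensorProduct.map_comp, LinearMap.comp_id, LinearMap.comp_assoc]]
  simp only [← LinearMap.comp_assoc]
  rw [core]
  simp only [LinearMap.comp_assoc]
  rw [co]

lemma conv_eta (f : H →ₗ[ℂ] H) :
    convol f (Algebra.linearMap ℂ H ∘ₗ CoalgebraStruct.counit) = f := by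
  unfold convol
  rw [show TensorProduct.map f
        (Algebra.linearMap ℂ H ∘ₗ CoalgebraStruct.counit (R := ℂ) (A := H)) =
      TensorProduct.map f (Algebra.linearMap ℂ H) ∘ₗ
        TensorProduct.map LinearMap.id CoalgebraStruct.counit by
    rw [← TensorProduct.map_comp, LinearMap.comp_id]]
  have hc : (TensorProduct.map LinearMap.id (CoalgebraStruct.counit (R := ℂ) (A := H))) ∘ₗ
      CoalgebraStruct.comul = (TensorProduct.mk ℂ H ℂ).flip 1 :=
    Coalgebra.lTensor_counit_comp_comul
  simp only [LinearMap.comp_assoc]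
  rw [hc]
  ext x
  simp [LinearMap.mul'_apply, Algebra.algebraMap_eq_smul_one]

lemma eta_conv (f : H →ₗ[ℂ] H) :
    convol (Algebra.linearMap ℂ H ∘ₗ CoalgebraStruct.counit) f = f := by
  unfold convol
  rw [show TensorProduct.map
        (Algebra.linearMap ℂ H ∘ₗ CoalgebraStruct.counit (R := ℂ) (A := H)) f =
      TensorProduct.map (Algebra.linearMap ℂ H) f ∘ₗ
        TensorProduct.map CoalgebraStruct.counit LinearMap.id by
    rw [← TensorProduct.map_comp, LinearMap.comp_id]]
  have hc : (TensorProduct.map (CoalgebraStruct.counit (R := ℂ) (A := H)) LinearMap.id) ∘ₗ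
      CoalgebraStruct.comul = TensorProduct.mk ℂ ℂ H 1 :=
    Coalgebra.rTensor_counit_comp_comul
  simp only [LinearMap.comp_assoc]
  rw [hc]
  ext x
  simp [LinearMap.mul'_apply, Algebra.algebraMap_eq_smul_one]

lemma conv_S_id :
    convol (HopfAlgebra.antipode (R := ℂ) (A := H)) LinearMap.id =
      Algebra.linearMap ℂ H ∘ₗ CoalgebraStruct.counit :=
  HopfAlgebra.mul_antipode_rTensor_comul

lemma conv_id_S :
    convol LinearMap.id (HopfAlgebra.antipode (R := ℂ) (A := H)) =
      Algebra.linearMap ℂ H ∘ₗ CoalgebraStruct.counit :=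
  HopfAlgebra.mul_antipode_lTensor_comul

section grouplike
variable (u : H) (hu : u * u = 1)
    (hcomul : CoalgebraStruct.comul (R := ℂ) u = u ⊗ₜ[ℂ] u)
    (hcounit : CoalgebraStruct.counit (R := ℂ) u = 1)

lemma comul_mulRight (hcomul : CoalgebraStruct.comul (R := ℂ) u = u ⊗ₜ[ℂ] u) :
    CoalgebraStruct.comul (R := ℂ) (A := H) ∘ₗ LinearMap.mulRight ℂ u =
      LinearMap.mulRight ℂ (u ⊗ₜ[ℂ] u) ∘ₗ CoalgebraStruct.comul := by
  ext x
  simp [LinearMap.mulRight_apply, Bialgebra.comul_mul, hcomul]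

lemma comul_mulLeft (hcomul : CoalgebraStruct.comul (R := ℂ) u = u ⊗ₜ[ℂ] u) :
    CoalgebraStruct.comul (R := ℂ) (A := H) ∘ₗ LinearMap.mulLeft ℂ u =
      LinearMap.mulLeft ℂ (u ⊗ₜ[ℂ] u) ∘ₗ CoalgebraStruct.comul := by
  ext x
  simp [LinearMap.mulLeft_apply, Bialgebra.comul_mul, hcomul]

lemma map_mulRight_mulRight :
    TensorProduct.map (LinearMap.mulRight ℂ u) (LinearMap.mulRight ℂ u) =
      LinearMap.mulRight ℂ (u ⊗ₜ[ℂ] u) := by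
  apply TensorProduct.ext'
  intro a b
  simp [Algebra.TensorProduct.tmul_mul_tmul]

lemma map_mulLeft_mulLeft :
    TensorProduct.map (LinearMap.mulLeft ℂ u) (LinearMap.mulLeft ℂ u) =
      LinearMap.mulLeft ℂ (u ⊗ₜ[ℂ] u) := by
  apply TensorProduct.ext'
  intro a b
  simp [Algebra.TensorProduct.tmul_mul_tmul]

include hcomul hcounit in
lemma conv_fh : convol ((HopfAlgebra.antipode (R := ℂ) (A := H)) ∘ₗ LinearMap.mulRight ℂ u)
    (LinearMap.mulRight ℂ u) = Algebra.linearMap ℂ H ∘ₗ CoalgebraStruct.counit := by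
  have hr : (HopfAlgebra.antipode (R := ℂ) (A := H)).rTensor H =
      TensorProduct.map (HopfAlgebra.antipode (R := ℂ) (A := H)) LinearMap.id := rfl
  unfold convol
  rw [show TensorProduct.map ((HopfAlgebra.antipode (R := ℂ) (A := H)) ∘ₗ
        LinearMap.mulRight ℂ u) (LinearMap.mulRight ℂ u) =
      TensorProduct.map (HopfAlgebra.antipode (R := ℂ) (A := H)) LinearMap.id ∘ₗ
        TensorProduct.map (LinearMap.mulRight ℂ u) (LinearMap.mulRight ℂ u) by
    rw [← TensorProduct.map_comp, LinearMap.id_comp]]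
  ext x
  simp only [LinearMap.comp_apply, map_mulRight_mulRight, LinearMap.mulRight_apply]
  rw [show CoalgebraStruct.comul (R := ℂ) x * (u ⊗ₜ[ℂ] u) =
      CoalgebraStruct.comul (R := ℂ) (x * u) by
    rw [Bialgebra.comul_mul, hcomul]]
  rw [← hr, HopfAlgebra.mul_antipode_rTensor_comul_apply]
  simp [Bialgebra.counit_mul, hcounit]

include hu in
lemma conv_hg : convol (LinearMap.mulRight ℂ u)
    ((LinearMap.mulLeft ℂ u) ∘ₗ (HopfAlgebra.antipode (R := ℂ) (A := H))) =
    Algebra.linearMap ℂ H ∘ₗ CoalgebraStruct.counit := by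
  have hu' : ∀ x : H, u * (u * x) = x := fun x => by rw [← mul_assoc, hu, one_mul]
  unfold convol
  simp only [← LinearMap.comp_assoc]
  rw [show LinearMap.mul' ℂ H ∘ₗ TensorProduct.map (LinearMap.mulRight ℂ u)
        ((LinearMap.mulLeft ℂ u) ∘ₗ (HopfAlgebra.antipode (R := ℂ) (A := H))) =
      LinearMap.mul' ℂ H ∘ₗ TensorProduct.map LinearMap.id
        (HopfAlgebra.antipode (R := ℂ) (A := H)) by
    apply TensorProduct.ext'
    intro a b
    simp [LinearMap.mul'_apply, mul_assoc, hu']]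
  simp only [LinearMap.comp_assoc]
  exact HopfAlgebra.mul_antipode_lTensor_comul

include hcomul hcounit in
lemma conv_hf' : convol (LinearMap.mulLeft ℂ u)
    ((HopfAlgebra.antipode (R := ℂ) (A := H)) ∘ₗ LinearMap.mulLeft ℂ u) =
    Algebra.linearMap ℂ H ∘ₗ CoalgebraStruct.counit := by
  have hl : (HopfAlgebra.antipode (R := ℂ) (A := H)).lTensor H =
      TensorProduct.map LinearMap.id (HopfAlgebra.antipode (R := ℂ) (A := H)) := rfl
  unfold convol
  rw [show TensorProduct.map (LinearMap.mulLeft ℂ u)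
        ((HopfAlgebra.antipode (R := ℂ) (A := H)) ∘ₗ LinearMap.mulLeft ℂ u) =
      TensorProduct.map LinearMap.id (HopfAlgebra.antipode (R := ℂ) (A := H)) ∘ₗ
        TensorProduct.map (LinearMap.mulLeft ℂ u) (LinearMap.mulLeft ℂ u) by
    rw [← TensorProduct.map_comp, LinearMap.id_comp]]
  ext x
  simp only [LinearMap.comp_apply, map_mulLeft_mulLeft, LinearMap.mulLeft_apply]
  rw [show (u ⊗ₜ[ℂ] u) * CoalgebraStruct.comul (R := ℂ) x =
      CoalgebraStruct.comul (R := ℂ) (u * x) by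
    rw [Bialgebra.comul_mul, hcomul]]
  rw [← hl, HopfAlgebra.mul_antipode_lTensor_comul_apply]
  simp [Bialgebra.counit_mul, hcounit]

include hu in
lemma conv_g'h' : convol ((LinearMap.mulRight ℂ u) ∘ₗ (HopfAlgebra.antipode (R := ℂ) (A := H)))
    (LinearMap.mulLeft ℂ u) = Algebra.linearMap ℂ H ∘ₗ CoalgebraStruct.counit := by
  have hu' : ∀ x : H, u * (u * x) = x := fun x => by rw [← mul_assoc, hu, one_mul]
  unfold convol
  simp only [← LinearMap.comp_assoc]
  rw [show LinearMap.mul' ℂ H ∘ₗ TensorProduct.map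
        ((LinearMap.mulRight ℂ u) ∘ₗ (HopfAlgebra.antipode (R := ℂ) (A := H)))
        (LinearMap.mulLeft ℂ u) =
      LinearMap.mul' ℂ H ∘ₗ TensorProduct.map
        (HopfAlgebra.antipode (R := ℂ) (A := H)) LinearMap.id by
    apply TensorProduct.ext'
    intro a b
    simp [LinearMap.mul'_apply, mul_assoc, hu']]
  simp only [LinearMap.comp_assoc]
  exact HopfAlgebra.mul_antipode_rTensor_comul

end grouplike

section commute
variable (u : H) (hu : u * u = 1)
    (hcomul : CoalgebraStruct.comul (R := ℂ) u = u ⊗ₜ[ℂ] u)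
    (hcounit : CoalgebraStruct.counit (R := ℂ) u = 1)

include hu hcomul hcounit in
lemma S_mulRight : (HopfAlgebra.antipode (R := ℂ) (A := H)) ∘ₗ LinearMap.mulRight ℂ u =
    LinearMap.mulLeft ℂ u ∘ₗ (HopfAlgebra.antipode (R := ℂ) (A := H)) := by
  calc (HopfAlgebra.antipode (R := ℂ) (A := H)) ∘ₗ LinearMap.mulRight ℂ u
      = convol ((HopfAlgebra.antipode (R := ℂ) (A := H)) ∘ₗ LinearMap.mulRight ℂ u)
          (Algebra.linearMap ℂ H ∘ₗ CoalgebraStruct.counit) := (conv_eta _).symm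
    _ = convol ((HopfAlgebra.antipode (R := ℂ) (A := H)) ∘ₗ LinearMap.mulRight ℂ u)
          (convol (LinearMap.mulRight ℂ u)
            ((LinearMap.mulLeft ℂ u) ∘ₗ (HopfAlgebra.antipode (R := ℂ) (A := H)))) := by
        rw [conv_hg u hu]
    _ = convol (convol ((HopfAlgebra.antipode (R := ℂ) (A := H)) ∘ₗ LinearMap.mulRight ℂ u)
          (LinearMap.mulRight ℂ u))
          ((LinearMap.mulLeft ℂ u) ∘ₗ (HopfAlgebra.antipode (R := ℂ) (A := H))) :=
        (conv_assoc _ _ _).symm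
    _ = convol (Algebra.linearMap ℂ H ∘ₗ CoalgebraStruct.counit)
          ((LinearMap.mulLeft ℂ u) ∘ₗ (HopfAlgebra.antipode (R := ℂ) (A := H))) := by
        rw [conv_fh u hcomul hcounit]
    _ = (LinearMap.mulLeft ℂ u) ∘ₗ (HopfAlgebra.antipode (R := ℂ) (A := H)) := eta_conv _

include hu hcomul hcounit in
lemma S_mulLeft : (HopfAlgebra.antipode (R := ℂ) (A := H)) ∘ₗ LinearMap.mulLeft ℂ u =
    LinearMap.mulRight ℂ u ∘ₗ (HopfAlgebra.antipode (R := ℂ) (A := H)) := by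
  calc (HopfAlgebra.antipode (R := ℂ) (A := H)) ∘ₗ LinearMap.mulLeft ℂ u
      = convol (Algebra.linearMap ℂ H ∘ₗ CoalgebraStruct.counit)
          ((HopfAlgebra.antipode (R := ℂ) (A := H)) ∘ₗ LinearMap.mulLeft ℂ u) :=
        (eta_conv _).symm
    _ = convol (convol ((LinearMap.mulRight ℂ u) ∘ₗ (HopfAlgebra.antipode (R := ℂ) (A := H)))
          (LinearMap.mulLeft ℂ u))
          ((HopfAlgebra.antipode (R := ℂ) (A := H)) ∘ₗ LinearMap.mulLeft ℂ u) := by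
        rw [conv_g'h' u hu]
    _ = convol ((LinearMap.mulRight ℂ u) ∘ₗ (HopfAlgebra.antipode (R := ℂ) (A := H)))
          (convol (LinearMap.mulLeft ℂ u)
            ((HopfAlgebra.antipode (R := ℂ) (A := H)) ∘ₗ LinearMap.mulLeft ℂ u)) :=
        conv_assoc _ _ _
    _ = convol ((LinearMap.mulRight ℂ u) ∘ₗ (HopfAlgebra.antipode (R := ℂ) (A := H)))
          (Algebra.linearMap ℂ H ∘ₗ CoalgebraStruct.counit) := by
        rw [conv_hf' u hcomul hcounit]
    _ = (LinearMap.mulRight ℂ u) ∘ₗ (HopfAlgebra.antipode (R := ℂ) (A := H)) := conv_eta _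

include hu hcomul hcounit in
lemma S_mul_u (x : H) : (HopfAlgebra.antipode (R := ℂ) (A := H)) (x * u) =
    u * (HopfAlgebra.antipode (R := ℂ) (A := H)) x := by
  have := LinearMap.congr_fun (S_mulRight u hu hcomul hcounit) x
  simpa using this

include hu hcomul hcounit in
lemma S_u_mul (x : H) : (HopfAlgebra.antipode (R := ℂ) (A := H)) (u * x) =
    (HopfAlgebra.antipode (R := ℂ) (A := H)) x * u := by
  have := LinearMap.congr_fun (S_mulLeft u hu hcomul hcounit) x
  simpa using this

end commute

end AuxConv

/-- If `u² = 1`, `Δ(u) = u ⊗ u` and `ε(u) = 1`, the picture-changed antipode `S_u` satisfies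
the antipode axioms `m ∘ (S_u ⊗ id) ∘ Δ_u = η ∘ ε` and `m ∘ (id ⊗ S_u) ∘ Δ_u = η ∘ ε`. -/
theorem Su_antipode (u : H) (hu : u * u = 1)
    (hcomul : CoalgebraStruct.comul (R := ℂ) u = u ⊗ₜ[ℂ] u)
    (hcounit : CoalgebraStruct.counit (R := ℂ) u = 1) :
    LinearMap.mul' ℂ H ∘ₗ TensorProduct.map (Su H u) LinearMap.id ∘ₗ Deltau H u =
        Algebra.linearMap ℂ H ∘ₗ CoalgebraStruct.counit (R := ℂ) (A := H) ∧
      LinearMap.mul' ℂ H ∘ₗ TensorProduct.map LinearMap.id (Su H u) ∘ₗ Deltau H u =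
        Algebra.linearMap ℂ H ∘ₗ CoalgebraStruct.counit (R := ℂ) (A := H) := by
  have hSr : ∀ x : H, (HopfAlgebra.antipode (R := ℂ) (A := H)) (x * u) =
      u * (HopfAlgebra.antipode (R := ℂ) (A := H)) x := S_mul_u u hu hcomul hcounit
  have hSl : ∀ x : H, (HopfAlgebra.antipode (R := ℂ) (A := H)) (u * x) =
      (HopfAlgebra.antipode (R := ℂ) (A := H)) x * u := S_u_mul u hu hcomul hcounit
  have hu' : ∀ x : H, u * (u * x) = x := fun x => by rw [← mul_assoc, hu, one_mul]
  have hr : (HopfAlgebra.antipode (R := ℂ) (A := H)).rTensor H =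
      TensorProduct.map (HopfAlgebra.antipode (R := ℂ) (A := H)) LinearMap.id := rfl
  have hl : (HopfAlgebra.antipode (R := ℂ) (A := H)).lTensor H =
      TensorProduct.map LinearMap.id (HopfAlgebra.antipode (R := ℂ) (A := H)) := rfl
  constructor
  · have key1 : (LinearMap.mul' ℂ H ∘ₗ TensorProduct.map (Su H u) LinearMap.id) ∘ₗ Pmap H u =
        ((2 : ℂ)⁻¹ • ((LinearMap.id : H →ₗ[ℂ] H) + conjH H u + LinearMap.mulLeft ℂ u
            - LinearMap.mulRight ℂ u)) ∘ₗ
          (LinearMap.mul' ℂ H ∘ₗ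
            TensorProduct.map (HopfAlgebra.antipode (R := ℂ) (A := H)) LinearMap.id) := by
      apply TensorProduct.ext'
      intro a t
      simp only [Pmap, Su, conjT, conjH, pEven, pOdd, LinearMap.comp_apply,
        LinearMap.add_apply, LinearMap.sub_apply, LinearMap.smul_apply, LinearMap.id_apply,
        LinearMap.mulLeft_apply, LinearMap.mulRight_apply,
        Algebra.TensorProduct.tmul_mul_tmul, one_mul, mul_one,
        map_add, map_sub, map_smul, TensorProduct.map_tmul, LinearMap.mul'_apply,
        sub_mul, add_mul, mul_add, mul_sub, TensorProduct.add_tmul, TensorProduct.sub_tmul,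
        TensorProduct.smul_tmul', TensorProduct.tmul_add, TensorProduct.tmul_sub,
        TensorProduct.tmul_smul, hSr, hSl, mul_assoc, hu, hu',
        smul_add, smul_sub, mul_smul_comm, smul_mul_assoc]
      module
    have keta : ((2 : ℂ)⁻¹ • ((LinearMap.id : H →ₗ[ℂ] H) + conjH H u + LinearMap.mulLeft ℂ u
        - LinearMap.mulRight ℂ u)) ∘ₗ Algebra.linearMap ℂ H = Algebra.linearMap ℂ H := by
      ext
      simp only [LinearMap.comp_apply, Algebra.linearMap_apply, map_one, LinearMap.smul_apply,
        LinearMap.add_apply, LinearMap.sub_apply, LinearMap.id_apply, conjH,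
        LinearMap.comp_apply, LinearMap.mulLeft_apply, LinearMap.mulRight_apply, mul_one,
        one_mul, hu]
      rw [show (1 : H) + 1 + u - u = (1 : H) + 1 by abel, ← two_smul ℂ (1 : H), smul_smul]
      norm_num
    show LinearMap.mul' ℂ H ∘ₗ TensorProduct.map (Su H u) LinearMap.id ∘ₗ
        (Pmap H u ∘ₗ CoalgebraStruct.comul) = _
    simp only [← LinearMap.comp_assoc]
    rw [key1]
    simp only [LinearMap.comp_assoc]
    rw [← hr, HopfAlgebra.mul_antipode_rTensor_comul, ← LinearMap.comp_assoc, keta]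
  · have key2 : (LinearMap.mul' ℂ H ∘ₗ TensorProduct.map LinearMap.id (Su H u)) ∘ₗ Pmap H u =
        LinearMap.mul' ℂ H ∘ₗ
          TensorProduct.map LinearMap.id (HopfAlgebra.antipode (R := ℂ) (A := H)) := by
      apply TensorProduct.ext'
      intro a t
      simp only [Pmap, Su, conjT, conjH, pEven, pOdd, LinearMap.comp_apply,
        LinearMap.add_apply, LinearMap.sub_apply, LinearMap.smul_apply, LinearMap.id_apply,
        LinearMap.mulLeft_apply, LinearMap.mulRight_apply,
        Algebra.TensorProduct.tmul_mul_tmul, one_mul, mul_one,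
        map_add, map_sub, map_smul, TensorProduct.map_tmul, LinearMap.mul'_apply,
        sub_mul, add_mul, mul_add, mul_sub, TensorProduct.add_tmul, TensorProduct.sub_tmul,
        TensorProduct.smul_tmul', TensorProduct.tmul_add, TensorProduct.tmul_sub,
        TensorProduct.tmul_smul, mul_assoc, hu, hu',
        smul_add, smul_sub, mul_smul_comm, smul_mul_assoc]
      module
    show LinearMap.mul' ℂ H ∘ₗ TensorProduct.map LinearMap.id (Su H u) ∘ₗ
        (Pmap H u ∘ₗ CoalgebraStruct.comul) = _
    simp only [← LinearMap.comp_assoc]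
    rw [key2]
    simp only [LinearMap.comp_assoc]
    rw [← hl, HopfAlgebra.mul_antipode_lTensor_comul]
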